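/- arXiv:2005.12953 — 6 statements merged into one kernel-verified Lean document; each statement's English description precedes it below -/
import Mathlib

section
/- Let k be a field, R = k[x,y,z] with 𝔪 = (x,y,z), let d ≥ 2 be an integer, and let I ⊆ R be the ideal generated by the monomials z·x^i·y^{d−1−i} for 0 ≤ i ≤ d−1, x^{2+j}·y^{d−2−j} for 0 ≤ j ≤ d−2, y^d, and z^d. Then I is 𝔪-primary, and for every integer t ≥ 0 one has dim_k Soc(R/I)_t = (d−2)·[t = d−1] + 1·[t = d] + (d−1)·[t = 2d−3], where [·] equals 1 if the condition holds and 0 otherwise and the contributions are added when the listed degrees coincide. In particular, if d ≥ 3 then every homogeneous polynomial of degree 2d−2 belongs to I. -/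
open MvPolynomial

/-- The maximal graded ideal `𝔪 = (x, y, z)` of `k[x,y,z]`. -/
noncomputable def mIdeal (k : Type*) [Field k] : Ideal (MvPolynomial (Fin 3) k) :=
  Ideal.span (Set.range (X : Fin 3 → MvPolynomial (Fin 3) k))

/-- `dim_k Soc(R/I)_t`, the dimension of the degree-`t` component of the socle
`(I : 𝔪)/I` of `R/I`, realized as the image in `R/I` of the degree-`t` part of the
colon ideal `(I : 𝔪)`. -/
noncomputable def socDimAt {k : Type*} [Field k] (I : Ideal (MvPolynomial (Fin 3) k))
    (t : ℕ) : ℕ :=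
  Module.finrank k
    ↥(Submodule.map (Ideal.Quotient.mkₐ k I).toLinearMap
      ((Submodule.colon I (mIdeal k)).restrictScalars k ⊓ homogeneousSubmodule (Fin 3) k t))

/-!
`I` is a monomial ideal, so a polynomial lies in `I` exactly when each of its exponent vectors
lies in the upper closure of the generators' exponents; for `x^a y^b z^c` this is the condition
`(c ≥ 1 ∧ a + b ≥ d - 1) ∨ (a ≥ 2 ∧ a + b ≥ d) ∨ b ≥ d ∨ c ≥ d`. For any monomial ideal,
`(I : 𝔪)` and the homogeneous components are spanned by monomials, so `Soc(R/I)_t` has as a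
basis the monomials of degree `t` outside `I` that `x`, `y` and `z` all move into `I`. Here
these are `z^{d-1} x^a y^{d-2-a}` (degree `2d-3`), `x^a y^{d-1-a}` with `2 ≤ a ≤ d-1` (degree
`d-1`) and `x y^{d-1}` (degree `d`). Every monomial of degree `≥ 2d-1`, and for `d ≥ 3` of
degree `2d-2`, satisfies the membership condition, which gives the remaining two claims.
-/

open Finsupp

namespace MvPolynomial

variable {σ R : Type*}

theorem mem_colon_idealOfVars_iff [CommRing R] {I : Ideal (MvPolynomial σ R)}
    {p : MvPolynomial σ R} : p ∈ I.colon (idealOfVars σ R) ↔ ∀ i, X i * p ∈ I := by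
  rw [Ideal.colon_span, Submodule.mem_colon, Set.forall_mem_range]
  simp only [smul_eq_mul, mul_comm]

theorem X_mul_mem_span_monomial_image_iff [CommSemiring R] {S : Set (σ →₀ ℕ)}
    {p : MvPolynomial σ R} (i : σ) :
    X i * p ∈ Ideal.span ((fun s => monomial s (1 : R)) '' S) ↔
      ∀ m ∈ p.support, m + single i 1 ∈ upperClosure S := by
  classical
  simp [mem_ideal_span_monomial_image, support_X_mul, mem_upperClosure, add_comm]

theorem restrictScalars_span_monomial_image [CommSemiring R] (S : Set (σ →₀ ℕ)) :
    (Ideal.span ((fun s => monomial s (1 : R)) '' S)).restrictScalars R =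
      restrictSupport R (upperClosure S) := by
  ext p
  simp [mem_ideal_span_monomial_image, mem_restrictSupport_iff, Set.subset_def, mem_upperClosure]

theorem restrictScalars_colon_span_monomial_image [CommRing R] (S : Set (σ →₀ ℕ)) :
    ((Ideal.span ((fun s => monomial s (1 : R)) '' S)).colon (idealOfVars σ R)).restrictScalars R =
      restrictSupport R {m | ∀ i, m + single i 1 ∈ upperClosure S} := by
  ext p
  simp only [Submodule.restrictScalars_mem, mem_colon_idealOfVars_iff,
    X_mul_mem_span_monomial_image_iff, mem_restrictSupport_iff, Set.subset_def]
  exact ⟨fun h m hm i => h i m hm, fun h i m hm => h m hm i⟩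

theorem restrictSupport_inf [CommSemiring R] (s t : Set (σ →₀ ℕ)) :
    restrictSupport R s ⊓ restrictSupport R t = restrictSupport R (s ∩ t) := by
  ext p
  simp only [Submodule.mem_inf, mem_restrictSupport_iff, Set.subset_inter_iff]

theorem disjoint_restrictSupport [CommSemiring R] {s t : Set (σ →₀ ℕ)}
    (h : Disjoint s t) : Disjoint (restrictSupport R s) (restrictSupport R t) := by
  rw [Submodule.disjoint_def]
  intro p hs ht
  rw [mem_restrictSupport_iff] at hs ht
  rw [← support_eq_empty, ← Finset.coe_eq_empty]
  exact Set.subset_empty_iff.mp (h hs ht)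

theorem finrank_map_restrictSupport {k M : Type*} [Field k] [AddCommGroup M] [Module k M]
    {f : MvPolynomial σ k →ₗ[k] M} {U : Set (σ →₀ ℕ)}
    (hf : LinearMap.ker f = restrictSupport k U)
    {A : Set (σ →₀ ℕ)} {B : Finset (σ →₀ ℕ)} (hB : ↑B = A \ U) :
    Module.finrank k (Submodule.map f (restrictSupport k A)) = B.card := by
  have hsplit : restrictSupport k A = restrictSupport k B ⊔ restrictSupport k (A ∩ U) := by
    simp only [restrictSupport_eq_span, ← Submodule.span_union, ← Set.image_union, hB,
      Set.sdiff_union_inter]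
  have hker : Submodule.map f (restrictSupport k (A ∩ U)) = ⊥ := by
    rw [← LinearMap.le_ker_iff_map, hf]
    exact restrictSupport_mono _ Set.inter_subset_right
  have hinj : Function.Injective (f.domRestrict (restrictSupport k B)) := by
    rw [LinearMap.injective_domRestrict_iff, hf]
    exact disjoint_restrictSupport (hB ▸ Set.disjoint_sdiff_left)
  rw [hsplit, Submodule.map_sup, hker, sup_bot_eq, ← LinearMap.range_domRestrict,
    LinearMap.finrank_range_of_inj hinj,
    Module.finrank_eq_card_basis (basisRestrictSupport k _)]
  simp only [Finset.coe_sort_coe, Fintype.card_coe]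

theorem finrank_socle_span_monomial_image {k : Type*} [Field k] {S : Set (σ →₀ ℕ)}
    {J : Ideal (MvPolynomial σ k)} (hJ : J = Ideal.span ((fun s => monomial s (1 : k)) '' S))
    (t : ℕ) {B : Finset (σ →₀ ℕ)} (hB : ∀ m, m ∈ B ↔
      (m ∉ upperClosure S ∧ ∀ i, m + single i 1 ∈ upperClosure S) ∧ m.degree = t) :
    Module.finrank k (Submodule.map (Ideal.Quotient.mkₐ k J).toLinearMap
      ((J.colon (idealOfVars σ k)).restrictScalars k ⊓ homogeneousSubmodule σ k t)) =
      B.card := by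
  have hker : LinearMap.ker (Ideal.Quotient.mkₐ k J).toLinearMap =
      restrictSupport k ↑(upperClosure S) := by
    rw [← restrictScalars_span_monomial_image, ← hJ]
    ext p
    simp [Ideal.Quotient.eq_zero_iff_mem]
  subst hJ
  rw [restrictScalars_colon_span_monomial_image, homogeneousSubmodule_eq_finsupp_supported,
    ← restrictSupport, restrictSupport_inf]
  refine finrank_map_restrictSupport hker ?_
  ext m
  simp only [hB, Set.mem_sdiff, Set.mem_inter_iff, Set.mem_ofPred_eq, SetLike.mem_coe]
  tauto

end MvPolynomial

noncomputable def xyz (a b c : ℕ) : Fin 3 →₀ ℕ := single 0 a + single 1 b + single 2 c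

@[simp] theorem xyz_apply_zero (a b c : ℕ) : xyz a b c 0 = a := by simp [xyz]
@[simp] theorem xyz_apply_one (a b c : ℕ) : xyz a b c 1 = b := by simp [xyz]
@[simp] theorem xyz_apply_two (a b c : ℕ) : xyz a b c 2 = c := by simp [xyz]

theorem eq_xyz (m : Fin 3 →₀ ℕ) : m = xyz (m 0) (m 1) (m 2) := by
  ext i
  fin_cases i <;> simp

@[simp] theorem xyz_inj {a b c a' b' c' : ℕ} :
    xyz a b c = xyz a' b' c' ↔ a = a' ∧ b = b' ∧ c = c' := by
  refine ⟨fun h => ⟨?_, ?_, ?_⟩, fun ⟨ha, hb, hc⟩ => ha ▸ hb ▸ hc ▸ rfl⟩ <;>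
    [simpa using congrArg (· 0) h; simpa using congrArg (· 1) h; simpa using congrArg (· 2) h]

theorem xyz_le_iff {a b c : ℕ} {m : Fin 3 →₀ ℕ} :
    xyz a b c ≤ m ↔ a ≤ m 0 ∧ b ≤ m 1 ∧ c ≤ m 2 := by
  simp [Finsupp.le_def, Fin.forall_fin_succ]

theorem degree_fin_three (m : Fin 3 →₀ ℕ) : m.degree = m 0 + m 1 + m 2 := by
  simp [degree_eq_sum, Fin.sum_univ_three]

@[simp] theorem degree_xyz (a b c : ℕ) : (xyz a b c).degree = a + b + c := by
  simp [degree_fin_three]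

theorem monomial_xyz {k : Type*} [CommSemiring k] (a b c : ℕ) :
    monomial (xyz a b c) (1 : k) = X 0 ^ a * X 1 ^ b * X 2 ^ c := by
  simp [xyz, X_pow_eq_monomial, monomial_mul]

def generatorExps (d : ℕ) : Set (Fin 3 →₀ ℕ) :=
  {s | ∃ i ≤ d - 1, s = xyz i (d - 1 - i) 1} ∪
    {s | ∃ j ≤ d - 2, s = xyz (2 + j) (d - 2 - j) 0} ∪
    {xyz 0 d 0, xyz 0 0 d}

theorem generators_eq_image (k : Type*) [CommSemiring k] (d : ℕ) :
    ({p | ∃ i ≤ d - 1, p = X 2 * X 0 ^ i * X 1 ^ (d - 1 - i)} ∪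
       {p | ∃ j ≤ d - 2, p = X 0 ^ (2 + j) * X 1 ^ (d - 2 - j)} ∪
       {X 1 ^ d, X 2 ^ d} : Set (MvPolynomial (Fin 3) k)) =
      (fun s => monomial s (1 : k)) '' generatorExps d := by
  ext p
  simp only [generatorExps, Set.image_union, Set.image_insert_eq, Set.image_singleton,
    Set.mem_union, Set.mem_insert_iff, Set.mem_singleton_iff, Set.mem_image, Set.mem_ofPred_eq]
  simp [monomial_xyz, eq_comm (a := p), mul_comm, mul_assoc, mul_left_comm]

theorem mem_upperClosure_generatorExps {d : ℕ} {m : Fin 3 →₀ ℕ} :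
    m ∈ upperClosure (generatorExps d) ↔
      (1 ≤ m 2 ∧ d - 1 ≤ m 0 + m 1) ∨ (2 ≤ m 0 ∧ d ≤ m 0 + m 1) ∨ d ≤ m 1 ∨ d ≤ m 2 := by
  rw [mem_upperClosure]
  constructor
  · rintro ⟨s, ((⟨i, hi, rfl⟩ | ⟨j, hj, rfl⟩) | rfl | rfl), hsm⟩ <;>
      rw [xyz_le_iff] at hsm <;> omega
  · rintro (⟨h2, h01⟩ | ⟨h0, h01⟩ | h1 | h2)
    · exact ⟨xyz (min (m 0) (d - 1)) (d - 1 - min (m 0) (d - 1)) 1,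
        Or.inl (Or.inl ⟨_, min_le_right _ _, rfl⟩), xyz_le_iff.2 (by omega)⟩
    · exact ⟨xyz (2 + min (m 0 - 2) (d - 2)) (d - 2 - min (m 0 - 2) (d - 2)) 0,
        Or.inl (Or.inr ⟨_, min_le_right _ _, rfl⟩), xyz_le_iff.2 (by omega)⟩
    · exact ⟨xyz 0 d 0, Or.inr (Or.inl rfl), xyz_le_iff.2 (by omega)⟩
    · exact ⟨xyz 0 0 d, Or.inr (Or.inr rfl), xyz_le_iff.2 (by omega)⟩

theorem mem_upperClosure_generatorExps_of_le_degree {d : ℕ} (hd : 2 ≤ d) {m : Fin 3 →₀ ℕ}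
    (h : 2 * d - 1 ≤ m.degree) : m ∈ upperClosure (generatorExps d) := by
  rw [degree_fin_three] at h
  rw [mem_upperClosure_generatorExps]
  omega

theorem mem_upperClosure_generatorExps_of_degree_eq {d : ℕ} (hd : 3 ≤ d) {m : Fin 3 →₀ ℕ}
    (h : m.degree = 2 * d - 2) : m ∈ upperClosure (generatorExps d) := by
  rw [degree_fin_three] at h
  rw [mem_upperClosure_generatorExps]
  omega

noncomputable def socleExps (d : ℕ) : Finset (Fin 3 →₀ ℕ) :=
  (Finset.range (d - 1)).image (fun a => xyz a (d - 2 - a) (d - 1)) ∪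
    (Finset.Icc 2 (d - 1)).image (fun a => xyz a (d - 1 - a) 0) ∪ {xyz 1 (d - 1) 0}

theorem mem_socleExps {d : ℕ} (hd : 2 ≤ d) {m : Fin 3 →₀ ℕ} :
    m ∈ socleExps d ↔
      m ∉ upperClosure (generatorExps d) ∧
        ∀ i, m + single i 1 ∈ upperClosure (generatorExps d) := by
  conv_lhs => rw [eq_xyz m]
  simp only [socleExps, Finset.mem_union, Finset.mem_image, Finset.mem_range, Finset.mem_Icc,
    Finset.mem_singleton, xyz_inj, existsAndEq, true_and, mem_upperClosure_generatorExps,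
    Fin.forall_fin_succ, IsEmpty.forall_iff, and_true, Finsupp.add_apply, single_apply,
    Fin.succ_zero_eq_one, Fin.succ_one_eq_two, Fin.reduceEq, ↓reduceIte]
  omega

theorem Finset.card_filter_eq_ite_of_forall {α β : Type*} [DecidableEq β] {s : Finset α}
    {f : α → β} {b : β} (h : ∀ a ∈ s, f a = b) (c : β) :
    (s.filter (f · = c)).card = if c = b then s.card else 0 := by
  split_ifs with hc
  · rw [Finset.filter_true_of_mem fun a ha => (h a ha).trans hc.symm]
  · rw [Finset.filter_false_of_mem fun a ha hac => hc (hac.symm.trans (h a ha)), Finset.card_empty]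

theorem card_filter_degree_socleExps {d : ℕ} (hd : 2 ≤ d) (t : ℕ) :
    ((socleExps d).filter (·.degree = t)).card =
      (d - 2) * (if t = d - 1 then 1 else 0) + (if t = d then 1 else 0)
        + (d - 1) * (if t = 2 * d - 3 then 1 else 0) := by
  classical
  have hinj (f : ℕ → Fin 3 →₀ ℕ) (hf : ∀ a, f a 0 = a) : Function.Injective f :=
    fun a b h => by simpa [hf] using congrArg (· 0) h
  rw [socleExps, Finset.filter_union, Finset.filter_union,
    Finset.card_union_of_disjoint, Finset.card_union_of_disjoint,
    Finset.card_filter_eq_ite_of_forall (b := 2 * d - 3),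
    Finset.card_filter_eq_ite_of_forall (b := d - 1),
    Finset.card_filter_eq_ite_of_forall (b := d),
    Finset.card_image_of_injective _ (hinj _ fun _ => xyz_apply_zero ..),
    Finset.card_image_of_injective _ (hinj _ fun _ => xyz_apply_zero ..),
    Finset.card_range, Nat.card_Icc, Finset.card_singleton]
  · split_ifs <;> omega
  · simp only [Finset.mem_singleton, forall_eq, degree_xyz]; omega
  · simp only [Finset.forall_mem_image, Finset.mem_Icc, degree_xyz]; omega
  · simp only [Finset.forall_mem_image, Finset.mem_range, degree_xyz]; omega
  · refine Finset.disjoint_filter_filter (Finset.disjoint_iff_ne.2 ?_)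
    simp only [Finset.forall_mem_image, Finset.mem_range, Finset.mem_Icc, ne_eq, xyz_inj]
    omega
  · rw [← Finset.filter_union]
    refine Finset.disjoint_filter_filter (Finset.disjoint_singleton_right.2 ?_)
    simp only [Finset.mem_union, Finset.mem_image, Finset.mem_range, Finset.mem_Icc, xyz_inj]
    omega

/-- For `I = (z(x,y)^{d−1}, x²(x,y)^{d−2}, y^d, z^d) ⊆ k[x,y,z]` with `d ≥ 2`:
`I` is `𝔪`-primary, and `dim_k Soc(R/I)_t = (d−2)·[t=d−1] + [t=d] + (d−1)·[t=2d−3]`.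
In particular, if `d ≥ 3` then every homogeneous polynomial of degree `2d−2` lies in `I`. -/
theorem stmt1 {k : Type*} [Field k] (d : ℕ) (hd : 2 ≤ d)
    (I : Ideal (MvPolynomial (Fin 3) k))
    (hI : I = Ideal.span
      ({p | ∃ i ≤ d - 1, p = X 2 * X 0 ^ i * X 1 ^ (d - 1 - i)} ∪
       {p | ∃ j ≤ d - 2, p = X 0 ^ (2 + j) * X 1 ^ (d - 2 - j)} ∪
       {X 1 ^ d, X 2 ^ d})) :
    (∃ N : ℕ, 1 ≤ N ∧ (mIdeal k) ^ N ≤ I)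
    ∧ (∀ t : ℕ, socDimAt I t =
        (d - 2) * (if t = d - 1 then 1 else 0) + (if t = d then 1 else 0)
          + (d - 1) * (if t = 2 * d - 3 then 1 else 0))
    ∧ (3 ≤ d → ∀ h : MvPolynomial (Fin 3) k, h.IsHomogeneous (2 * d - 2) → h ∈ I) := by
  have hJ := hI.trans (congrArg Ideal.span (generators_eq_image k d))
  refine ⟨⟨2 * d - 1, by omega, fun p hp => ?_⟩, fun t => ?_, fun hd3 h hh => ?_⟩
  · rw [hJ, mem_ideal_span_monomial_image]
    intro m hm
    exact mem_upperClosure_generatorExps_of_le_degree hd ((mem_pow_idealOfVars_iff _ p).1 hp m hm)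
  · refine (finrank_socle_span_monomial_image hJ t (B := (socleExps d).filter (·.degree = t))
      fun m => ?_).trans (card_filter_degree_socleExps hd t)
    rw [Finset.mem_filter, mem_socleExps hd]
  · rw [hJ, mem_ideal_span_monomial_image]
    intro m hm
    exact mem_upperClosure_generatorExps_of_degree_eq hd3
      (by_contra fun hdeg => MvPolynomial.mem_support_iff.1 hm (hh.coeff_eq_zero hdeg))
end

section
/- Let k be a field, R = k[x,y,z] with 𝔪 = (x,y,z), let d' ≥ 2 be an integer, and let I = (x^{2d'}, y^{2d'}, z^{2d'}, x^{d'}·y^{d'}, x·z^{2d'−1}). Then I is 𝔪-primary, and for every integer t ≥ 0 one has dim_k Soc(R/I)_t = 1·[t = 4d'−2] + 2·[t = 5d'−4], where [·] equals 1 if the condition holds and 0 otherwise and the contributions are added when 4d'−2 = 5d'−4 (i.e. when d' = 2). -/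
/-
`I` is a monomial ideal, so membership in `I` and in `I : 𝔪` is read off monomial by monomial,
and distinct monomials outside `I` stay linearly independent in `R/I`. Hence `Soc(R/I)_t` has
a basis of the monomials `x^μ ∉ I` of degree `t` with `x_i x^μ ∈ I` for all `i` (the inner
corners of the staircase of `I`). For these generators there are exactly three:
`y^{2d'-1} z^{2d'-1}` in degree `4d'-2`, and `x^{2d'-1} y^{d'-1} z^{2d'-2}`,
`x^{d'-1} y^{2d'-1} z^{2d'-2}` in degree `5d'-4`. Every monomial of degree `6d'` has an
exponent `≥ 2d'`, so `𝔪^{6d'} ⊆ I`.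
-/

open MvPolynomial

namespace MvPolynomial

open Finsupp
open scoped Finset

variable {σ R k : Type*}

section CommSemiring

variable [CommSemiring R]

variable (R) in
noncomputable abbrev monomialIdeal (S : Set (σ →₀ ℕ)) : Ideal (MvPolynomial σ R) :=
  Ideal.span ((monomial · 1) '' S)

def socleExponents (S : Set (σ →₀ ℕ)) : Set (σ →₀ ℕ) :=
  {μ | μ ∉ upperClosure S ∧ ∀ i, μ + single i 1 ∈ upperClosure S}

variable {S : Set (σ →₀ ℕ)}

theorem mem_monomialIdeal_iff {p : MvPolynomial σ R} :
    p ∈ monomialIdeal R S ↔ ∀ μ ∈ p.support, μ ∈ upperClosure S := by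
  simp only [mem_ideal_span_monomial_image, mem_upperClosure]

theorem monomial_one_mem_monomialIdeal_iff [Nontrivial R] {μ : σ →₀ ℕ} :
    monomial μ (1 : R) ∈ monomialIdeal R S ↔ μ ∈ upperClosure S := by
  classical
  simp [mem_monomialIdeal_iff, support_monomial]

theorem mem_colon_idealOfVars_iff_s3 {p : MvPolynomial σ R} :
    p ∈ (monomialIdeal R S).colon (idealOfVars σ R) ↔
      ∀ μ ∈ p.support, ∀ i, μ + single i 1 ∈ upperClosure S := by
  simp only [idealOfVars, Ideal.colon_span, Submodule.mem_colon, Set.forall_mem_range,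
    smul_eq_mul, mem_monomialIdeal_iff, support_mul_X, Finset.mem_map, addRightEmbedding_apply,
    forall_exists_index, and_imp, forall_apply_eq_imp_iff₂]
  exact ⟨fun h μ hμ i ↦ h i μ hμ, fun h i μ hμ ↦ h μ hμ i⟩

theorem idealOfVars_pow_le_monomialIdeal {N : ℕ}
    (h : ∀ μ : σ →₀ ℕ, N ≤ μ.degree → μ ∈ upperClosure S) :
    idealOfVars σ R ^ N ≤ monomialIdeal R S := fun p hp ↦
  mem_monomialIdeal_iff.mpr fun μ hμ ↦ h μ ((mem_pow_idealOfVars_iff N p).mp hp μ hμ)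

end CommSemiring

variable [Field k] {S : Set (σ →₀ ℕ)}

theorem linearIndepOn_mk_monomial :
    LinearIndepOn k (fun μ ↦ Ideal.Quotient.mkₐ k (monomialIdeal k S) (monomial μ 1))
      (upperClosure S : Set (σ →₀ ℕ))ᶜ := by
  have hv : LinearIndepOn k (monomial · (1 : k)) (upperClosure S : Set (σ →₀ ℕ))ᶜ := by
    rw [← coe_basisMonomials]
    exact (basisMonomials σ k).linearIndependent.linearIndepOn _
  refine hv.map (f := (Ideal.Quotient.mkₐ k (monomialIdeal k S)).toLinearMap) ?_
  rw [← Set.image_eq_range (fun μ ↦ monomial μ (1 : k)), ← restrictSupport_eq_span,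
    Submodule.disjoint_def]
  intro p hp hker
  rw [LinearMap.mem_ker, AlgHom.toLinearMap_apply, Ideal.Quotient.mkₐ_eq_mk,
    Ideal.Quotient.eq_zero_iff_mem, mem_monomialIdeal_iff] at hker
  rw [← support_eq_empty, Finset.eq_empty_iff_forall_notMem]
  exact fun μ hμ ↦ hp hμ (hker μ hμ)

theorem map_colon_inf_homogeneousSubmodule (t : ℕ) :
    Submodule.map (Ideal.Quotient.mkₐ k (monomialIdeal k S)).toLinearMap
      (((monomialIdeal k S).colon (idealOfVars σ k)).restrictScalars k ⊓
        homogeneousSubmodule σ k t) =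
      Submodule.span k ((fun μ ↦ Ideal.Quotient.mkₐ k (monomialIdeal k S) (monomial μ 1)) ''
        {μ ∈ socleExponents S | μ.degree = t}) := by
  set F := fun μ ↦ Ideal.Quotient.mkₐ k (monomialIdeal k S) (monomial μ (1 : k))
  apply le_antisymm
  · rintro _ ⟨p, ⟨hcolon, hhom⟩, rfl⟩
    have hcolon' := mem_colon_idealOfVars_iff_s3.mp hcolon
    have hsum :
        Ideal.Quotient.mkₐ k (monomialIdeal k S) p = ∑ μ ∈ p.support, coeff μ p • F μ := by
      conv_lhs => rw [p.as_sum]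
      simp only [F, map_sum, ← map_smul, smul_eq_mul, mul_one]
    rw [AlgHom.toLinearMap_apply, hsum]
    refine Submodule.sum_mem _ fun μ hμ ↦ Submodule.smul_mem _ _ ?_
    by_cases hup : μ ∈ upperClosure S
    · rw [show F μ = 0 from Ideal.Quotient.eq_zero_iff_mem.mpr
        (monomial_one_mem_monomialIdeal_iff.mpr hup)]
      exact Submodule.zero_mem _
    · refine Submodule.subset_span ⟨μ, ⟨⟨hup, hcolon' μ hμ⟩, ?_⟩, rfl⟩
      rw [degree_eq_weight_one]
      exact hhom (mem_support_iff.mp hμ)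
  · rw [Submodule.span_le]
    rintro _ ⟨μ, ⟨hsoc, hdeg⟩, rfl⟩
    refine Submodule.mem_map_of_mem ⟨?_, isHomogeneous_monomial _ hdeg⟩
    classical
    rw [SetLike.mem_coe, Submodule.restrictScalars_mem, mem_colon_idealOfVars_iff_s3,
      support_monomial, if_neg one_ne_zero]
    simpa using hsoc.2

theorem finrank_map_colon_inf_homogeneousSubmodule {E : Finset (σ →₀ ℕ)}
    (hE : socleExponents S = E) (t : ℕ) :
    Module.finrank k (Submodule.map (Ideal.Quotient.mkₐ k (monomialIdeal k S)).toLinearMap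
      (((monomialIdeal k S).colon (idealOfVars σ k)).restrictScalars k ⊓
        homogeneousSubmodule σ k t)) = #{μ ∈ E | μ.degree = t} := by
  have hT : {μ ∈ socleExponents S | μ.degree = t} = ↑{μ ∈ E | μ.degree = t} := by
    rw [hE, Finset.coe_filter]
    rfl
  rw [map_colon_inf_homogeneousSubmodule, hT, Set.image_eq_range,
    finrank_span_eq_card]
  · simp only [Finset.coe_sort_coe, Fintype.card_coe]
  · refine linearIndepOn_mk_monomial.mono ?_
    rw [← hT]
    exact fun μ hμ ↦ hμ.1.1

end MvPolynomial

section ThreeVariables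

open Finsupp
open scoped Finset

noncomputable def tri (a b c : ℕ) : Fin 3 →₀ ℕ := single 0 a + single 1 b + single 2 c

@[simp] theorem tri_apply_zero (a b c : ℕ) : tri a b c 0 = a := by simp [tri]
@[simp] theorem tri_apply_one (a b c : ℕ) : tri a b c 1 = b := by simp [tri]
@[simp] theorem tri_apply_two (a b c : ℕ) : tri a b c 2 = c := by simp [tri]

theorem le_iff_fin_three {μ ν : Fin 3 →₀ ℕ} : μ ≤ ν ↔ μ 0 ≤ ν 0 ∧ μ 1 ≤ ν 1 ∧ μ 2 ≤ ν 2 := by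
  simp [Finsupp.le_def, Fin.forall_fin_succ]

theorem ext_iff_fin_three {μ ν : Fin 3 →₀ ℕ} : μ = ν ↔ μ 0 = ν 0 ∧ μ 1 = ν 1 ∧ μ 2 = ν 2 := by
  simp [Finsupp.ext_iff, Fin.forall_fin_succ]

theorem degree_eq_fin_three (μ : Fin 3 →₀ ℕ) : μ.degree = μ 0 + μ 1 + μ 2 := by
  rw [degree_eq_sum, Fin.sum_univ_three]

theorem degree_tri (a b c : ℕ) : (tri a b c).degree = a + b + c := by
  simp [degree_eq_fin_three]

theorem monomial_tri {R : Type*} [CommSemiring R] (a b c : ℕ) :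
    monomial (tri a b c) (1 : R) = X 0 ^ a * X 1 ^ b * X 2 ^ c := by
  simp only [tri, X_pow_eq_monomial, monomial_mul, mul_one]

def generatorExponents (d : ℕ) : Set (Fin 3 →₀ ℕ) :=
  {tri (2 * d) 0 0, tri 0 (2 * d) 0, tri 0 0 (2 * d), tri d d 0, tri 1 0 (2 * d - 1)}

theorem span_generators_eq_monomialIdeal {R : Type*} [CommSemiring R] (d : ℕ) :
    Ideal.span {X 0 ^ (2 * d), X 1 ^ (2 * d), X 2 ^ (2 * d),
      X 0 ^ d * X 1 ^ d, X 0 * X 2 ^ (2 * d - 1)} =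
      monomialIdeal R (generatorExponents d) := by
  simp only [monomialIdeal, generatorExponents, Set.image_insert_eq, Set.image_singleton,
    monomial_tri, pow_zero, pow_one, mul_one, one_mul]

theorem mem_upperClosure_generatorExponents_iff {d : ℕ} {μ : Fin 3 →₀ ℕ} :
    μ ∈ upperClosure (generatorExponents d) ↔ 2 * d ≤ μ 0 ∨ 2 * d ≤ μ 1 ∨ 2 * d ≤ μ 2 ∨
      (d ≤ μ 0 ∧ d ≤ μ 1) ∨ (1 ≤ μ 0 ∧ 2 * d - 1 ≤ μ 2) := by
  simp [mem_upperClosure, generatorExponents, le_iff_fin_three]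

noncomputable def socleCorners (d : ℕ) : Finset (Fin 3 →₀ ℕ) :=
  {tri 0 (2 * d - 1) (2 * d - 1), tri (2 * d - 1) (d - 1) (2 * d - 2),
    tri (d - 1) (2 * d - 1) (2 * d - 2)}

theorem socleExponents_generatorExponents {d : ℕ} (hd : 2 ≤ d) :
    socleExponents (generatorExponents d) = socleCorners d := by
  ext μ
  simp only [socleExponents, socleCorners, Set.mem_ofPred_eq, Finset.coe_insert,
    Finset.coe_singleton, Set.mem_insert_iff, Set.mem_singleton_iff, ext_iff_fin_three,
    mem_upperClosure_generatorExponents_iff, Fin.forall_fin_succ, IsEmpty.forall_iff, and_true,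
    Finsupp.coe_add, Pi.add_apply, single_apply, tri_apply_zero, tri_apply_one, tri_apply_two,
    Fin.isValue, Fin.succ_zero_eq_one, Fin.succ_one_eq_two, Fin.reduceEq, ↓reduceIte]
  omega

theorem card_filter_socleCorners_degree {d : ℕ} (hd : 2 ≤ d) (t : ℕ) :
    #{μ ∈ socleCorners d | μ.degree = t} =
      (if t = 4 * d - 2 then 1 else 0) + 2 * (if t = 5 * d - 4 then 1 else 0) := by
  rw [socleCorners, Finset.card_filter, Finset.sum_insert, Finset.sum_insert, Finset.sum_singleton]
  · simp only [degree_tri]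
    split_ifs <;> omega
  all_goals
    simp only [Finset.mem_insert, Finset.mem_singleton, ext_iff_fin_three, tri_apply_zero,
      tri_apply_one, tri_apply_two]
    omega

end ThreeVariables

/-- For `I = (x^{2d'}, y^{2d'}, z^{2d'}, x^{d'}y^{d'}, x z^{2d'−1})` with `d' ≥ 2`:
`I` is `𝔪`-primary and `dim_k Soc(R/I)_t = [t = 4d'−2] + 2·[t = 5d'−4]`. -/
theorem stmt3 {k : Type*} [Field k] (d' : ℕ) (hd' : 2 ≤ d')
    (I : Ideal (MvPolynomial (Fin 3) k))
    (hI : I = Ideal.span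
      {X 0 ^ (2 * d'), X 1 ^ (2 * d'), X 2 ^ (2 * d'),
       X 0 ^ d' * X 1 ^ d', X 0 * X 2 ^ (2 * d' - 1)}) :
    (∃ N : ℕ, 1 ≤ N ∧ (mIdeal k) ^ N ≤ I)
    ∧ (∀ t : ℕ, socDimAt I t =
        (if t = 4 * d' - 2 then 1 else 0) + 2 * (if t = 5 * d' - 4 then 1 else 0)) := by
  rw [span_generators_eq_monomialIdeal] at hI
  subst hI
  refine ⟨⟨6 * d', by omega, idealOfVars_pow_le_monomialIdeal fun μ hμ ↦ ?_⟩, fun t ↦ ?_⟩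
  · rw [degree_eq_fin_three] at hμ
    rw [mem_upperClosure_generatorExponents_iff]
    omega
  · rw [socDimAt, mIdeal, finrank_map_colon_inf_homogeneousSubmodule
      (socleExponents_generatorExponents hd'), card_filter_socleCorners_degree hd']
end

section
/- Let k be a field and S = k[u_{i,j} : 1 ≤ i ≤ 6, 1 ≤ j ≤ 5] the polynomial ring in the entries of the generic 6×5 matrix Θ = (u_{i,j}). Let B be the 5×5 submatrix of Θ formed by its first five rows, let Δ = det B ∈ S, let C be the cofactor matrix of B (so C_{i,j} = (−1)^{i+j} times the determinant of B with row i and column j deleted; C is the transpose of the adjugate of B), and let (Δ_1, Δ_2, Δ_3, Δ_4, Δ_5) = L·C, where L = (u_{6,1},…,u_{6,5}) is the last row of Θ. Then the polynomial 𝔻 = det [[Δ_1, Δ_2, Δ_3], [Δ_2, Δ_4, Δ_5], [Δ_3, Δ_5, −Δ]] is a nonzero element of S. -/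
/-!
It suffices to find one point at which `𝔻` does not vanish. Specialise `Θ` so that `B = 1` and
the last row is `v`: then `C = 1`, `Δ = 1` and `Δ_t = v_t`, so `𝔻` becomes
`det [[v₁,v₂,v₃],[v₂,v₄,v₅],[v₃,v₅,−1]]`, which equals `det (diag 1 1 (−1)) = −1` for
`v = (1,0,0,1,0)`.
-/

open MvPolynomial Matrix

/-- The generic 6×5 matrix `Θ = (u_{i,j})` over `S = k[u_{i,j}]`. -/
noncomputable def genericTheta (k : Type*) [Field k] :
    Matrix (Fin 6) (Fin 5) (MvPolynomial (Fin 6 × Fin 5) k) :=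
  fun i j => X (i, j)

/-- `B`: the upper 5×5 submatrix of the generic 6×5 matrix. -/
noncomputable def genericB (k : Type*) [Field k] :
    Matrix (Fin 5) (Fin 5) (MvPolynomial (Fin 6 × Fin 5) k) :=
  fun i j => genericTheta k i.castSucc j

/-- The cofactor matrix of `B` (the transpose of the adjugate). -/
noncomputable def genericC (k : Type*) [Field k] :
    Matrix (Fin 5) (Fin 5) (MvPolynomial (Fin 6 × Fin 5) k) :=
  (genericB k).adjugate.transpose

/-- `(Δ_1, …, Δ_5) = L·C` where `L` is the last row of `Θ`. -/
noncomputable def genericDelta (k : Type*) [Field k] (t : Fin 5) :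
    MvPolynomial (Fin 6 × Fin 5) k :=
  ∑ j, genericTheta k (Fin.last 5) j * genericC k j t

section Specialization

variable {k : Type*} [Field k]

lemma genericB_map_eval (x : Fin 6 × Fin 5 → k) :
    (genericB k).map (eval x) = Matrix.of fun i j => x (i.castSucc, j) := by
  ext i j
  simp [genericB, genericTheta]

lemma eval_genericDelta (x : Fin 6 × Fin 5 → k) (t : Fin 5) :
    eval x (genericDelta k t) =
      ∑ j, x (Fin.last 5, j) * ((genericB k).map (eval x)).adjugate t j := by
  simp only [genericDelta, genericC, genericTheta, map_sum, _root_.map_mul, eval_X,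
    transpose_apply, ← RingHom.mapMatrix_apply, ← RingHom.map_adjugate]
  rfl

def unitBlockPoint (v : Fin 5 → k) : Fin 6 × Fin 5 → k :=
  fun p => Fin.lastCases (v p.2) (fun i => (1 : Matrix (Fin 5) (Fin 5) k) i p.2) p.1

lemma genericB_map_eval_unitBlockPoint (v : Fin 5 → k) :
    (genericB k).map (eval (unitBlockPoint v)) = 1 := by
  rw [genericB_map_eval]
  ext i j
  simp [unitBlockPoint]

lemma eval_genericB_det_unitBlockPoint (v : Fin 5 → k) :
    eval (unitBlockPoint v) (genericB k).det = 1 := by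
  rw [RingHom.map_det, RingHom.mapMatrix_apply, genericB_map_eval_unitBlockPoint, det_one]

lemma eval_genericDelta_unitBlockPoint (v : Fin 5 → k) (t : Fin 5) :
    eval (unitBlockPoint v) (genericDelta k t) = v t := by
  rw [eval_genericDelta, genericB_map_eval_unitBlockPoint, adjugate_one]
  simp only [unitBlockPoint, Fin.lastCases_last]
  simp [one_apply]

end Specialization

/-- The polynomial `𝔻 = det [[Δ₁,Δ₂,Δ₃],[Δ₂,Δ₄,Δ₅],[Δ₃,Δ₅,−Δ]]`, where `Δ = det B`,
is a nonzero element of `S = k[u_{i,j} : 1 ≤ i ≤ 6, 1 ≤ j ≤ 5]`. -/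
theorem stmt4 (k : Type*) [Field k] :
    Matrix.det
      !![genericDelta k 0, genericDelta k 1, genericDelta k 2;
         genericDelta k 1, genericDelta k 3, genericDelta k 4;
         genericDelta k 2, genericDelta k 4, -(genericB k).det] ≠ 0 := by
  intro h
  have h_eval := congrArg (eval (unitBlockPoint (k := k) ![1, 0, 0, 1, 0])) h
  rw [det_fin_three] at h_eval
  simp [eval_genericDelta_unitBlockPoint, eval_genericB_det_unitBlockPoint] at h_eval
end

section
/- Let k be a field, n ≥ 1, R = k[x_1,…,x_n], m ≥ 1 an integer, and let f ∈ R be a homogeneous polynomial every exponent vector α in whose support satisfies α_i ≤ m−1 for all i. Define the socle-like Newton dual of f as f̂ := Σ_{α ∈ supp f} c_α · x^{ν−α}, where c_α is the coefficient of x^α in f and ν = (m−1, m−1, …, m−1). Then for every polynomial h ∈ R: h·f ∈ (x_1^m,…,x_n^m) if and only if for every δ ∈ ℕ^n one has Σ_β b_β · ĉ_{β+δ} = 0, where b_β is the coefficient of x^β in h and ĉ_γ is the coefficient of x^γ in f̂. (Equivalently, the colon ideal (x_1^m,…,x_n^m) : (f) is the annihilator of f̂ under the contraction action of R on polynomials,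 so f̂ is a generator of the Macaulay inverse system of this colon ideal.) -/
/-!
Writing `ν = (m-1,…,m-1)`, the coefficients of `f̂` are those of `f` reflected in the box
`[0, ν]`, so the contraction pairing `Σ_β b_β ĉ_{β+δ}` is the coefficient of `x^{ν-δ}` in `h f`
when `δ ≤ ν`, and vanishes otherwise. On the other hand `(x_1^m,…,x_n^m)` is a monomial ideal,
so `h f` lies in it exactly when all its coefficients inside the box vanish; as `δ` runs over the
box, so does `ν - δ`.
-/

open MvPolynomial

namespace MvPolynomial

variable {σ R : Type*} [CommSemiring R]

noncomputable def newtonDual (ν : σ →₀ ℕ) (f : MvPolynomial σ R) : MvPolynomial σ R :=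
  ∑ α ∈ f.support, monomial (ν - α) (coeff α f)

theorem coeff_newtonDual_of_not_le {ν τ : σ →₀ ℕ} (f : MvPolynomial σ R) (hτ : ¬τ ≤ ν) :
    coeff τ (newtonDual ν f) = 0 := by
  classical
  refine (coeff_sum _ _ _).trans (Finset.sum_eq_zero fun α _ => ?_)
  rw [coeff_monomial, if_neg]
  rintro rfl
  exact hτ tsub_le_self

theorem coeff_newtonDual_of_le {ν τ : σ →₀ ℕ} {f : MvPolynomial σ R}
    (hf : ∀ α ∈ f.support, α ≤ ν) (hτ : τ ≤ ν) :
    coeff τ (newtonDual ν f) = coeff (ν - τ) f := by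
  classical
  rw [newtonDual, coeff_sum, Finset.sum_eq_single (ν - τ)]
  · rw [coeff_monomial, if_pos (tsub_tsub_cancel_of_le hτ)]
  · intro α hα hne
    rw [coeff_monomial, if_neg]
    rintro rfl
    exact hne (tsub_tsub_cancel_of_le (hf α hα)).symm
  · intro hns
    rw [notMem_support_iff.mp hns, monomial_zero, coeff_zero]

theorem coeff_mul_eq_sum_support (h f : MvPolynomial σ R) (γ : σ →₀ ℕ) :
    coeff γ (h * f) = ∑ β ∈ h.support, if β ≤ γ then coeff β h * coeff (γ - β) f else 0 := by
  conv_lhs => rw [h.as_sum, Finset.sum_mul, coeff_sum]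
  exact Finset.sum_congr rfl fun β _ => coeff_monomial_mul' _ _ _ _

theorem sum_coeff_mul_coeff_add_newtonDual_of_le {ν δ : σ →₀ ℕ} {f : MvPolynomial σ R}
    (hf : ∀ α ∈ f.support, α ≤ ν) (hδ : δ ≤ ν) (h : MvPolynomial σ R) :
    ∑ β ∈ h.support, coeff β h * coeff (β + δ) (newtonDual ν f) = coeff (ν - δ) (h * f) := by
  rw [coeff_mul_eq_sum_support]
  refine Finset.sum_congr rfl fun β _ => ?_
  by_cases hβ : β + δ ≤ ν
  · rw [coeff_newtonDual_of_le hf hβ, if_pos ((le_tsub_iff_right hδ).mpr hβ), add_comm,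
      tsub_add_eq_tsub_tsub]
  · rw [coeff_newtonDual_of_not_le f hβ, mul_zero,
      if_neg fun h => hβ ((le_tsub_iff_right hδ).mp h)]

theorem sum_coeff_mul_coeff_add_newtonDual_of_not_le {ν δ : σ →₀ ℕ} (f h : MvPolynomial σ R)
    (hδ : ¬δ ≤ ν) :
    ∑ β ∈ h.support, coeff β h * coeff (β + δ) (newtonDual ν f) = 0 :=
  Finset.sum_eq_zero fun β _ => by
    rw [coeff_newtonDual_of_not_le f fun h => hδ (le_add_self.trans h), mul_zero]

theorem mem_span_X_pow_iff_coeff_eq_zero {m : ℕ} {p : MvPolynomial σ R} :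
    p ∈ Ideal.span (Set.range fun i => (X i : MvPolynomial σ R) ^ m) ↔
      ∀ γ : σ →₀ ℕ, (∀ i, γ i < m) → coeff γ p = 0 := by
  have hspan : (Set.range fun i => (X i : MvPolynomial σ R) ^ m) =
      (fun s => monomial s (1 : R)) '' Set.range fun i => Finsupp.single i m := by
    rw [← Set.range_comp]
    congr 1
    funext i
    exact X_pow_eq_monomial
  rw [hspan, mem_ideal_span_monomial_image]
  simp only [Set.exists_range_iff, Finsupp.single_le_iff, mem_support_iff]
  refine ⟨fun H γ hγ => ?_, fun H γ hγ => ?_⟩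
  · by_contra hne
    obtain ⟨i, hi⟩ := H γ hne
    exact (hγ i).not_ge hi
  · by_contra! hlt
    exact hγ (H γ hlt)

end MvPolynomial

theorem stmt13_general {k : Type*} [Field k] (n : ℕ) (m : ℕ) (hm : 1 ≤ m)
    (f : MvPolynomial (Fin n) k)
    (hbox : ∀ α ∈ f.support, ∀ i, α i ≤ m - 1)
    (fhat : MvPolynomial (Fin n) k)
    (hfhat : fhat = ∑ α ∈ f.support,
      MvPolynomial.monomial (Finsupp.equivFunOnFinite.symm fun i => m - 1 - α i)
        (MvPolynomial.coeff α f)) :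
    ∀ h : MvPolynomial (Fin n) k,
      (h * f ∈ Ideal.span (Set.range fun i : Fin n => (X i : MvPolynomial (Fin n) k) ^ m))
      ↔ ∀ δ : Fin n →₀ ℕ,
          ∑ β ∈ h.support,
            MvPolynomial.coeff β h * MvPolynomial.coeff (β + δ) fhat = 0 := by
  intro h
  set ν : Fin n →₀ ℕ := Finsupp.equivFunOnFinite.symm fun _ => m - 1
  have hfν : ∀ α ∈ f.support, α ≤ ν := fun α hα i => hbox α hα i
  have hdual : fhat = newtonDual ν f := hfhat.trans (Finset.sum_congr rfl fun α _ => by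
    congr 2; exact Finsupp.ext fun i => by simp [ν])
  have hbox_iff : ∀ γ : Fin n →₀ ℕ, γ ≤ ν ↔ ∀ i, γ i < m :=
    fun γ => forall_congr' fun i => by
      simp only [ν, Finsupp.equivFunOnFinite_symm_apply_apply]; omega
  rw [mem_span_X_pow_iff_coeff_eq_zero, hdual]
  refine ⟨fun H δ => ?_, fun H γ hγ => ?_⟩
  · by_cases hδ : δ ≤ ν
    · rw [sum_coeff_mul_coeff_add_newtonDual_of_le hfν hδ]
      exact H _ ((hbox_iff _).mp tsub_le_self)
    · exact sum_coeff_mul_coeff_add_newtonDual_of_not_le f h hδ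
  · have := H (ν - γ)
    rwa [sum_coeff_mul_coeff_add_newtonDual_of_le hfν tsub_le_self,
      tsub_tsub_cancel_of_le ((hbox_iff γ).mpr hγ)] at this

/-- Let `f ∈ k[x_1,…,x_n]` be homogeneous with all exponents `≤ m−1`, and let
`f̂ = Σ_α c_α x^{ν−α}` (with `ν = (m−1,…,m−1)`) be its socle-like Newton dual. Then for
every polynomial `h`, one has `h·f ∈ (x_1^m,…,x_n^m)` if and only if for every `δ ∈ ℕ^n`,
`Σ_β b_β·ĉ_{β+δ} = 0` (where `b_β`, `ĉ_γ` are the coefficients of `h`, `f̂`), i.e. iff `h`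
annihilates `f̂` under the contraction action: `(x_1^m,…,x_n^m) : (f) = Ann(f̂)`. -/
theorem stmt13 {k : Type*} [Field k] (n : ℕ) (hn : 1 ≤ n) (m : ℕ) (hm : 1 ≤ m)
    (e : ℕ) (f : MvPolynomial (Fin n) k) (hfhom : f.IsHomogeneous e)
    (hbox : ∀ α ∈ f.support, ∀ i, α i ≤ m - 1)
    (fhat : MvPolynomial (Fin n) k)
    (hfhat : fhat = ∑ α ∈ f.support,
      MvPolynomial.monomial (Finsupp.equivFunOnFinite.symm fun i => m - 1 - α i)
        (MvPolynomial.coeff α f)) :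
    ∀ h : MvPolynomial (Fin n) k,
      (h * f ∈ Ideal.span (Set.range fun i : Fin n => (X i : MvPolynomial (Fin n) k) ^ m))
      ↔ ∀ δ : Fin n →₀ ℕ,
          ∑ β ∈ h.support,
            MvPolynomial.coeff β h * MvPolynomial.coeff (β + δ) fhat = 0 :=
  stmt13_general n m hm f hbox fhat hfhat
end

section
/- Let k be a field, n ≥ 1, R = k[x_1,…,x_n], and let m, e ≥ 1 be integers such that s := n(m−1) − e is even; set d := s/2 + 1. If m < d, then there is no homogeneous polynomial f of degree e with f ∉ (x_1^m,…,x_n^m) such that the colon ideal (x_1^m,…,x_n^m) : (f) is generated by its degree-d homogeneous component. -/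
open MvPolynomial

/-! The colon ideal `J : (f)` contains `J = (x_1^m, …, x_n^m)`, hence the pure power `x_1^m`
of degree `m`. An ideal generated by forms of degree `d` has no nonzero coefficient in degree
`< d`, so it cannot contain `x_1^m` once `m < d`. -/

namespace MvPolynomial

variable {σ R : Type*} [CommSemiring R] {S : Set (MvPolynomial σ R)} {d : ℕ}

theorem coeff_eq_zero_of_mem_span_of_isHomogeneous (hS : ∀ s ∈ S, s.IsHomogeneous d)
    {g : MvPolynomial σ R} (hg : g ∈ Ideal.span S) {u : σ →₀ ℕ} (hu : u.degree < d) :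
    coeff u g = 0 := by
  induction hg using Submodule.span_induction generalizing u with
  | mem s hs => exact (hS s hs).coeff_eq_zero hu.ne
  | zero => exact coeff_zero u
  | add a b _ _ ha hb => rw [coeff_add, ha hu, hb hu, add_zero]
  | smul c g _ hg =>
    classical
    rw [smul_eq_mul, coeff_mul]
    refine Finset.sum_eq_zero ?_
    rintro ⟨v, w⟩ hvw
    rw [Finset.HasAntidiagonal.mem_antidiagonal] at hvw
    have hw : w.degree ≤ u.degree := Finsupp.degree_mono (hvw ▸ le_add_self)
    rw [hg (hw.trans_lt hu), mul_zero]

theorem X_pow_notMem_span_of_isHomogeneous [Nontrivial R] (hS : ∀ s ∈ S, s.IsHomogeneous d)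
    {m : ℕ} (hmd : m < d) (i : σ) : X i ^ m ∉ Ideal.span S := fun h => by
  classical
  simpa [coeff_X_pow] using
    coeff_eq_zero_of_mem_span_of_isHomogeneous hS h (u := Finsupp.single i m) (by simpa)

end MvPolynomial

theorem stmt16_general {k : Type*} [Field k] (n : ℕ) (hn : 1 ≤ n)
    (m e : ℕ)
    (d : ℕ) (hmd : m < d) :
    ¬ ∃ (f : MvPolynomial (Fin n) k) (I : Ideal (MvPolynomial (Fin n) k)),
        f.IsHomogeneous e
        ∧ f ∉ Ideal.span (Set.range fun i : Fin n => (X i : MvPolynomial (Fin n) k) ^ m)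
        ∧ I = Submodule.colon
            (Ideal.span (Set.range fun i : Fin n => (X i : MvPolynomial (Fin n) k) ^ m))
            (Ideal.span {f})
        ∧ I = Ideal.span
            ((I.restrictScalars k ⊓ homogeneousSubmodule (Fin n) k d :
              Submodule k _) : Set _) := by
  rintro ⟨f, I, -, -, hI, hgen⟩
  let i : Fin n := ⟨0, hn⟩
  have hxI : (X i : MvPolynomial (Fin n) k) ^ m ∈ I :=
    hI ▸ Ideal.le_colon (Ideal.subset_span ⟨i, rfl⟩)
  rw [hgen] at hxI
  exact X_pow_notMem_span_of_isHomogeneous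
    (fun s hs => (mem_homogeneousSubmodule d s).mp (Submodule.mem_inf.mp hs).2) hmd i hxI

/-- For `m, e ≥ 1` with `s := n(m−1) − e` even and `d := s/2 + 1`: if `m < d`, then there
is no homogeneous polynomial `f` of degree `e` with `f ∉ (x_1^m,…,x_n^m)` such that the
colon ideal `(x_1^m,…,x_n^m) : (f)` is generated by its degree-`d` component. -/
theorem stmt16 {k : Type*} [Field k] (n : ℕ) (hn : 1 ≤ n)
    (m e : ℕ) (hm : 1 ≤ m) (he : 1 ≤ e)
    (heven : Even (n * (m - 1) - e))
    (d : ℕ) (hd : d = (n * (m - 1) - e) / 2 + 1) (hmd : m < d) :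
    ¬ ∃ (f : MvPolynomial (Fin n) k) (I : Ideal (MvPolynomial (Fin n) k)),
        f.IsHomogeneous e
        ∧ f ∉ Ideal.span (Set.range fun i : Fin n => (X i : MvPolynomial (Fin n) k) ^ m)
        ∧ I = Submodule.colon
            (Ideal.span (Set.range fun i : Fin n => (X i : MvPolynomial (Fin n) k) ^ m))
            (Ideal.span {f})
        ∧ I = Ideal.span
            ((I.restrictScalars k ⊓ homogeneousSubmodule (Fin n) k d :
              Submodule k _) : Set _) :=
  stmt16_general n hn m e d hmd
end

section
/- Let k be a field, R = k[x_1,…,x_n], and let ℓ_1,…,ℓ_n ∈ R_1 be k-linearly independent linear forms (hence a regular sequence). Let m_1,…,m_n ≥ 1 be integers and f ∈ R a homogeneous polynomial. Then for each 1 ≤ i ≤ n one has the equality of colon ideals (ℓ_1^{m_1},…,ℓ_n^{m_n}) : (f) = (ℓ_1^{m_1},…,ℓ_{i−1}^{m_{i−1}}, ℓ_i^{m_i+1}, ℓ_{i+1}^{m_{i+1}},…,ℓ_n^{m_n}) : (ℓ_i·f). Consequently, for every integer K ≥ 0: (ℓ_1^{m_1},…,ℓ_n^{m_n}) : (f) =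 (ℓ_1^{m_1+K},…,ℓ_n^{m_n+K}) : ((ℓ_1·ℓ_2⋯ℓ_n)^K·f). -/
/-! A surjective endomorphism of a Noetherian ring is injective, so `n` linearly independent
linear forms, which span the same space as the variables, are the images of the variables under a
`k`-algebra automorphism. Hence each `ℓ i` is a nonzerodivisor modulo any ideal `J` generated by
powers of the other forms, just as `X i` is modulo a monomial ideal not involving it. This
regularity gives `(J + (ℓ i ^ m)) : f = (J + (ℓ i ^ (m + 1))) : (ℓ i * f)`; applying it once to
each index raises all exponents by one at the cost of the factor `ℓ 1 ⋯ ℓ n`, and iterating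
`K` times gives the second equality. -/

theorem RingHom.injective_of_surjective_of_isNoetherianRing {R : Type*} [Ring R]
    [IsNoetherianRing R] (φ : R →+* R) (hφ : Function.Surjective φ) :
    Function.Injective φ := by
  have hmono : Monotone fun m => RingHom.ker (φ ^ m) := fun a b hab x hx => by
    rw [RingHom.mem_ker, RingHom.coe_pow] at hx ⊢
    rw [← Nat.sub_add_cancel hab, Function.iterate_add_apply, hx, iterate_map_zero]
  obtain ⟨N, hN⟩ := monotone_stabilizes_iff_noetherian.mpr inferInstance ⟨_, hmono⟩
  refine (injective_iff_map_eq_zero φ).mpr fun x hx => ?_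
  obtain ⟨y, rfl⟩ := hφ.iterate N x
  have hy : y ∈ RingHom.ker (φ ^ (N + 1)) := by
    rwa [RingHom.mem_ker, RingHom.coe_pow, Function.iterate_succ_apply']
  have hker : RingHom.ker (φ ^ N) = RingHom.ker (φ ^ (N + 1)) := hN (N + 1) N.le_succ
  rwa [← hker, RingHom.mem_ker, RingHom.coe_pow] at hy

namespace Ideal
variable {R : Type*} [CommRing R]

theorem colon_sup_span_pow_eq_colon_sup_span_pow_succ {J : Ideal R} {x : R}
    (hx : ∀ g, x * g ∈ J → g ∈ J) (m : ℕ) (f : R) :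
    (span {x ^ m} ⊔ J).colon (span {f}) = (span {x ^ (m + 1)} ⊔ J).colon (span {x * f}) := by
  ext h
  simp only [mem_colon_span_singleton, mem_span_singleton_sup]
  constructor
  · rintro ⟨a, b, hb, hab⟩
    exact ⟨a, x * b, J.mul_mem_left x hb, by linear_combination x * hab⟩
  · rintro ⟨a, b, hb, hab⟩
    refine ⟨a, h * f - a * x ^ m, hx _ ?_, by ring⟩
    convert hb using 1
    linear_combination -hab

theorem span_range_eq_span_singleton_sup_span_image_compl {ι : Type*} (g : ι → R) (i : ι) :
    span (Set.range g) = span {g i} ⊔ span (g '' {i}ᶜ) := by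
  rw [← span_insert, Set.insert_image_compl_eq_range]

end Ideal

def IsRegularModOtherPowers {R ι : Type*} [CommSemiring R] (ℓ : ι → R) : Prop :=
  ∀ (e : ι → ℕ) (i : ι) (g : R), ℓ i * g ∈ Ideal.span ((fun j => ℓ j ^ e j) '' {i}ᶜ) →
    g ∈ Ideal.span ((fun j => ℓ j ^ e j) '' {i}ᶜ)

namespace IsRegularModOtherPowers
variable {R ι : Type*} [CommRing R] {ℓ : ι → R} (hℓ : IsRegularModOtherPowers ℓ)
include hℓ

theorem colon_eq_colon_mul {e e' : ι → ℕ} {i : ι} (hi : e' i = e i + 1)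
    (hne : ∀ j ≠ i, e' j = e j) (f : R) :
    (Ideal.span (Set.range fun j => ℓ j ^ e j)).colon (Ideal.span {f})
      = (Ideal.span (Set.range fun j => ℓ j ^ e' j)).colon (Ideal.span {ℓ i * f}) := by
  have hothers : (fun j => ℓ j ^ e' j) '' {i}ᶜ = (fun j => ℓ j ^ e j) '' {i}ᶜ :=
    Set.image_congr fun j hj => by rw [hne j hj]
  rw [Ideal.span_range_eq_span_singleton_sup_span_image_compl _ i,
    Ideal.span_range_eq_span_singleton_sup_span_image_compl _ i, hothers, hi]
  exact Ideal.colon_sup_span_pow_eq_colon_sup_span_pow_succ (hℓ e i) (e i) f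

theorem colon_eq_colon_prod_mul [DecidableEq ι] (e : ι → ℕ) (f : R) (s : Finset ι) :
    (Ideal.span (Set.range fun j => ℓ j ^ e j)).colon (Ideal.span {f})
      = (Ideal.span (Set.range fun j => ℓ j ^ (e j + if j ∈ s then 1 else 0))).colon
          (Ideal.span {(∏ j ∈ s, ℓ j) * f}) := by
  induction s using Finset.induction_on with
  | empty => simp
  | insert a s ha ih =>
    rw [ih, Finset.prod_insert ha, mul_assoc]
    exact hℓ.colon_eq_colon_mul (by simp [ha]) (fun j hj => by simp [hj]) _

theorem colon_eq_colon_pow_prod_mul [Fintype ι] (e : ι → ℕ) (f : R) (K : ℕ) :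
    (Ideal.span (Set.range fun j => ℓ j ^ e j)).colon (Ideal.span {f})
      = (Ideal.span (Set.range fun j => ℓ j ^ (e j + K))).colon
          (Ideal.span {(∏ j, ℓ j) ^ K * f}) := by
  classical
  induction K with
  | zero => simp
  | succ K ih =>
    rw [ih, hℓ.colon_eq_colon_prod_mul _ _ Finset.univ, pow_succ', mul_assoc]
    simp only [Finset.mem_univ, if_true, add_assoc]

end IsRegularModOtherPowers

namespace MvPolynomial

theorem mem_span_X_pow_image_compl_of_X_mul_mem {σ R : Type*} [CommSemiring R] (e : σ → ℕ)
    {i : σ} {g : MvPolynomial σ R}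
    (hg : X i * g ∈ Ideal.span ((fun j => X j ^ e j) '' {i}ᶜ)) :
    g ∈ Ideal.span ((fun j => X j ^ e j) '' {i}ᶜ) := by
  have hmon : ((fun j => X j ^ e j) '' {i}ᶜ : Set (MvPolynomial σ R))
      = (fun d => monomial d 1) '' ((fun j => Finsupp.single j (e j)) '' {i}ᶜ) := by
    simp only [Set.image_image, X_pow_eq_monomial]
  rw [hmon, mem_ideal_span_monomial_image] at hg ⊢
  intro d hd
  obtain ⟨_, ⟨j, hj, rfl⟩, hle⟩ := hg (Finsupp.single i 1 + d) (by
    rwa [mem_support_iff, coeff_X_mul, ← mem_support_iff])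
  refine ⟨_, ⟨j, hj, rfl⟩, ?_⟩
  rw [Finsupp.single_le_iff] at hle ⊢
  rwa [Finsupp.add_apply, Finsupp.single_eq_of_ne hj, zero_add] at hle

section LinearForms
variable {σ k : Type*} [Fintype σ] [Field k] {ℓ : σ → MvPolynomial σ k}

theorem span_range_eq_span_range_X_of_linearIndependent (hhom : ∀ i, (ℓ i).IsHomogeneous 1)
    (hli : LinearIndependent k ℓ) : Submodule.span k (Set.range ℓ) = .span k (.range X) := by
  have hle : Submodule.span k (Set.range ℓ) ≤ .span k (.range X) := by
    rw [← homogeneousSubmodule_one_eq_span_X, Submodule.span_le, Set.range_subset_iff]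
    exact hhom
  have : FiniteDimensional k (Submodule.span k (Set.range (X : σ → MvPolynomial σ k))) :=
    FiniteDimensional.span_of_finite k (Set.finite_range _)
  refine Submodule.eq_of_le_of_finrank_le hle ?_
  rw [finrank_span_eq_card hli]
  exact finrank_range_le_card _

theorem aeval_bijective_of_linearIndependent (hhom : ∀ i, (ℓ i).IsHomogeneous 1)
    (hli : LinearIndependent k ℓ) :
    Function.Bijective (aeval (R := k) ℓ) := by
  have hsurj : Function.Surjective (aeval (R := k) ℓ) := by
    rw [← AlgHom.range_eq_top, eq_top_iff, ← adjoin_range_X, Algebra.adjoin_le_iff]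
    have : Submodule.span k (Set.range ℓ) ≤ Subalgebra.toSubmodule (aeval (R := k) ℓ).range :=
      Submodule.span_le.mpr (Set.range_subset_iff.mpr fun j => ⟨X j, aeval_X ℓ j⟩)
    rw [span_range_eq_span_range_X_of_linearIndependent hhom hli] at this
    exact Submodule.span_le.mp this
  exact ⟨(aeval (R := k) ℓ).toRingHom.injective_of_surjective_of_isNoetherianRing hsurj, hsurj⟩

theorem isRegularModOtherPowers_of_linearIndependent (hhom : ∀ i, (ℓ i).IsHomogeneous 1)
    (hli : LinearIndependent k ℓ) : IsRegularModOtherPowers ℓ := by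
  intro e i g hg
  let ψ := (AlgEquiv.ofBijective _ (aeval_bijective_of_linearIndependent hhom hli)).toRingEquiv
  have hspan : Ideal.span ((fun j => ℓ j ^ e j) '' {i}ᶜ)
      = (Ideal.span ((fun j => X j ^ e j) '' {i}ᶜ)).comap ψ.symm := by
    rw [← Ideal.map_comap_of_equiv, Ideal.map_span, Set.image_image]
    simp [ψ]
  have hψ : ψ.symm (ℓ i) = X i := ψ.symm_apply_eq.mpr (aeval_X ℓ i).symm
  rw [hspan, Ideal.mem_comap, map_mul, hψ] at hg
  rw [hspan, Ideal.mem_comap]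
  exact mem_span_X_pow_image_compl_of_X_mul_mem e hg

end LinearForms

end MvPolynomial

theorem stmt17_general {k : Type*} [Field k] (n : ℕ)
    (ℓ : Fin n → MvPolynomial (Fin n) k)
    (hhom : ∀ i, (ℓ i).IsHomogeneous 1)
    (hli : LinearIndependent k ℓ)
    (m : Fin n → ℕ)
    (f : MvPolynomial (Fin n) k) :
    (∀ i : Fin n,
      Submodule.colon (Ideal.span (Set.range fun j => ℓ j ^ m j)) (Ideal.span {f})
        = Submodule.colon
            (Ideal.span (Set.range fun j => ℓ j ^ (if j = i then m j + 1 else m j)))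
            (Ideal.span {ℓ i * f}))
    ∧ ∀ K : ℕ,
      Submodule.colon (Ideal.span (Set.range fun j => ℓ j ^ m j)) (Ideal.span {f})
        = Submodule.colon (Ideal.span (Set.range fun j => ℓ j ^ (m j + K)))
            (Ideal.span {(∏ j, ℓ j) ^ K * f}) := by
  have hℓ := MvPolynomial.isRegularModOtherPowers_of_linearIndependent hhom hli
  exact ⟨fun i => hℓ.colon_eq_colon_mul (by simp) (fun j hj => by simp [hj]) f,
    hℓ.colon_eq_colon_pow_prod_mul m f⟩

/-- For linearly independent linear forms `ℓ_1,…,ℓ_n ∈ k[x_1,…,x_n]`, integers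
`m_1,…,m_n ≥ 1` and a homogeneous `f`:
`(ℓ_1^{m_1},…,ℓ_n^{m_n}) : (f)
  = (ℓ_1^{m_1},…,ℓ_i^{m_i+1},…,ℓ_n^{m_n}) : (ℓ_i·f)` for every `i`, and consequently
`(ℓ_1^{m_1},…,ℓ_n^{m_n}) : (f)
  = (ℓ_1^{m_1+K},…,ℓ_n^{m_n+K}) : ((ℓ_1⋯ℓ_n)^K·f)` for every `K ≥ 0`. -/
theorem stmt17 {k : Type*} [Field k] (n : ℕ)
    (ℓ : Fin n → MvPolynomial (Fin n) k)
    (hhom : ∀ i, (ℓ i).IsHomogeneous 1)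
    (hli : LinearIndependent k ℓ)
    (m : Fin n → ℕ) (hm : ∀ i, 1 ≤ m i)
    (f : MvPolynomial (Fin n) k) (hf : ∃ e : ℕ, f.IsHomogeneous e) :
    (∀ i : Fin n,
      Submodule.colon (Ideal.span (Set.range fun j => ℓ j ^ m j)) (Ideal.span {f})
        = Submodule.colon
            (Ideal.span (Set.range fun j => ℓ j ^ (if j = i then m j + 1 else m j)))
            (Ideal.span {ℓ i * f}))
    ∧ ∀ K : ℕ,
      Submodule.colon (Ideal.span (Set.range fun j => ℓ j ^ m j)) (Ideal.span {f})
        = Submodule.colon (Ideal.span (Set.range fun j => ℓ j ^ (m j + K)))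
            (Ideal.span {(∏ j, ℓ j) ^ K * f}) :=
  stmt17_general n ℓ hhom hli m f
end
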